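/- Let A be a unital commutative associative algebra, B a vertex A-algebroid, g an automorphism of B of order T, and let M = ⊕_{n ∈ (1/T)ℕ} M(n) be a (1/T)ℕ-graded g-twisted module for the associated vertex algebra V_B. Then the degree-zero subspace M(0) is a module for the Lie A⁰-algebroid B⁰/A⁰∂A⁰ via a·w = a_{-1}w for a ∈ A⁰ and b·w = b₀w for b ∈ B⁰, where A⁰ and B⁰ are the g-fixed points. -/

import Mathlib

noncomputable section

/-- Generalized binomial coefficient `C(q, n)` for `q ∈ ℚ`. -/
def qchoose (q : ℚ) (n : ℕ) : ℚ :=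
  (∏ i ∈ Finset.range n, (q - i)) / (n.factorial : ℚ)

/-- A vertex algebra over ℂ: `Y u n v = uₙv`, with vacuum `vac = 𝟙`, the
truncation, vacuum and creation properties, and the Borcherds (Jacobi)
identity in component form. -/
structure VertexAlgebra (V : Type*) [AddCommGroup V] [Module ℂ V] where
  Y : V →ₗ[ℂ] ℤ → V →ₗ[ℂ] V
  vac : V
  trunc : ∀ u v, ∃ N : ℤ, ∀ n ≥ N, Y u n v = 0
  vac_act : ∀ v : V, Y vac (-1) v = v
  vac_act' : ∀ (v : V) (n : ℤ), n ≠ -1 → Y vac n v = 0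
  creation : ∀ u : V, Y u (-1) vac = u
  creation' : ∀ (u : V) (n : ℤ), 0 ≤ n → Y u n vac = 0
  borcherds : ∀ (u v w : V) (p q r : ℤ),
    ∑ᶠ i : ℕ, ((qchoose (p : ℚ) i : ℚ) : ℂ) • Y (Y u (r + i) v) (p + q - i) w
      = ∑ᶠ i : ℕ, ((-1 : ℂ) ^ i * ((qchoose (r : ℚ) i : ℚ) : ℂ)) •
          (Y u (p + r - i) (Y v (q + i) w)
            - ((-1 : ℂ) ^ r) • Y v (q + r - i) (Y u (p + i) w))

/-- A vertex `A`-algebroid: `act a v = a*v`, `br` the Leibniz bracket,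
`pi b a = π(b)(a)` the anchor, `pr u v = ⟨u,v⟩` the pairing, `d = ∂`. -/
structure VertexAlgebroid (A B : Type*) [CommRing A] [Algebra ℂ A]
    [AddCommGroup B] [Module ℂ B] where
  act : A →ₗ[ℂ] B →ₗ[ℂ] B
  act_one : ∀ v, act 1 v = v
  br : B →ₗ[ℂ] B →ₗ[ℂ] B
  leibniz : ∀ u v w, br u (br v w) = br (br u v) w + br v (br u w)
  pi : B →ₗ[ℂ] A →ₗ[ℂ] A
  pi_der : ∀ v a a', pi v (a * a') = a * pi v a' + (pi v a) * a'
  pi_hom : ∀ u v a, pi (br u v) a = pi u (pi v a) - pi v (pi u a)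
  pr : B →ₗ[ℂ] B →ₗ[ℂ] A
  pr_symm : ∀ u v, pr u v = pr v u
  d : A →ₗ[ℂ] B
  pi_d : ∀ a a', pi (d a) a' = 0
  id1 : ∀ a a' v, act a (act a' v) - act (a * a') v
          = act (pi v a) (d a') + act (pi v a') (d a)
  id2 : ∀ u a v, br u (act a v) = act (pi u a) v + act a (br u v)
  id3 : ∀ u v, br u v + br v u = d (pr u v)
  id4 : ∀ a v a', pi (act a v) a' = a * pi v a'
  id5 : ∀ a u v, pr (act a u) v = a * pr u v - pi u (pi v a)
  id6 : ∀ v v1 v2, pi v (pr v1 v2) = pr (br v v1) v2 + pr v1 (br v v2)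
  id7 : ∀ a a', d (a * a') = act a (d a') + act a' (d a)
  id8 : ∀ v a, br v (d a) = d (pi v a)
  id9 : ∀ v a, pr v (d a) = pi v a

/-- The data of the ℕ-graded vertex algebra `V_B` associated with a vertex
`A`-algebroid `B` (Gorbounov–Malikov–Schechtman): a vertex algebra `V` with
an internal ℕ-grading, with `(V_B)₍₀₎ = A`, `(V_B)₍₁₎ = B` (via the
embeddings `iA`, `iB`), vacuum equal to the identity `e` of `A`, the
structural identities `a₋₁a' = aa'`, `a₋₁b = ab`, `b₀b' = [b,b']`,
`b₁b' = ⟨b,b'⟩`, `b₀a = π(b)a`, `a₋₂𝟙 = ∂a`, and generated by `A ⊕ B`. -/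
structure GMSData (A B V : Type*) [CommRing A] [Algebra ℂ A]
    [AddCommGroup B] [Module ℂ B] [AddCommGroup V] [Module ℂ V]
    (Vb : VertexAlgebroid A B) where
  VA : VertexAlgebra V
  iA : A →ₗ[ℂ] V
  iB : B →ₗ[ℂ] V
  injA : Function.Injective iA
  injB : Function.Injective iB
  grade : ℕ → Submodule ℂ V
  internal : DirectSum.IsInternal grade
  grade0 : grade 0 = LinearMap.range iA
  grade1 : grade 1 = LinearMap.range iB
  grade_Y : ∀ (p q : ℕ) (u : V), u ∈ grade p → ∀ (n : ℤ), ∀ w ∈ grade q,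
      (((p : ℤ) + q - n - 1 < 0) → VA.Y u n w = 0) ∧
      (∀ m : ℕ, (m : ℤ) = (p : ℤ) + q - n - 1 → VA.Y u n w ∈ grade m)
  vac_eq : VA.vac = iA 1
  hAA : ∀ a a', VA.Y (iA a) (-1) (iA a') = iA (a * a')
  hAB : ∀ a b, VA.Y (iA a) (-1) (iB b) = iB (Vb.act a b)
  hBB0 : ∀ b b', VA.Y (iB b) 0 (iB b') = iB (Vb.br b b')
  hBB1 : ∀ b b', VA.Y (iB b) 1 (iB b') = iA (Vb.pr b b')
  hBA : ∀ b a, VA.Y (iB b) 0 (iA a) = iA (Vb.pi b a)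
  hD : ∀ a, VA.Y (iA a) (-2) VA.vac = iB (Vb.d a)
  generates : ∀ Wd : Submodule ℂ V, VA.vac ∈ Wd →
      (∀ u : V, (u ∈ LinearMap.range iA ∨ u ∈ LinearMap.range iB) →
        ∀ n : ℤ, ∀ w ∈ Wd, VA.Y u n w ∈ Wd) → Wd = ⊤

/-- An automorphism of a vertex `A`-algebroid `B`: a pair of an algebra
automorphism of `A` and a linear automorphism of `B` preserving all the
structure maps. -/
structure VAAut {A B : Type*} [CommRing A] [Algebra ℂ A]
    [AddCommGroup B] [Module ℂ B] (V : VertexAlgebroid A B) where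
  gA : A ≃ₐ[ℂ] A
  gB : B ≃ₗ[ℂ] B
  map_act : ∀ a v, gB (V.act a v) = V.act (gA a) (gB v)
  map_br : ∀ u v, gB (V.br u v) = V.br (gB u) (gB v)
  map_pr : ∀ u v, V.pr (gB u) (gB v) = gA (V.pr u v)
  map_d : ∀ a, gB (V.d a) = V.d (gA a)
  map_pi : ∀ b a, gA (V.pi b a) = V.pi (gB b) (gA a)

/-- A `g`-twisted module for a vertex algebra `V` with automorphism `g` of
order `T`. The operator `act v k` represents `v_{k/T}` (indices are in units
of `1/T`). -/
structure TwistedModule {V : Type*} [AddCommGroup V] [Module ℂ V]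
    (VA : VertexAlgebra V) (T : ℕ) (g : V ≃ₗ[ℂ] V)
    (W : Type*) [AddCommGroup W] [Module ℂ W] where
  act : V →ₗ[ℂ] ℤ → W →ₗ[ℂ] W
  trunc : ∀ (v : V) (w : W), ∃ N : ℤ, ∀ k ≥ N, act v k w = 0
  vac_act : ∀ w : W, act VA.vac (-(T : ℤ)) w = w
  vac_act' : ∀ (w : W) (k : ℤ), k ≠ -(T : ℤ) → act VA.vac k w = 0
  eigen : ∀ (u : V) (r : ℕ), r < T →
    g u = Complex.exp (2 * Real.pi * Complex.I * r / T) • u →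
    ∀ k : ℤ, ¬ (k ≡ (r : ℤ) [ZMOD (T : ℤ)]) → act u k = 0
  jacobi : ∀ (u : V) (r : ℕ), r < T →
    g u = Complex.exp (2 * Real.pi * Complex.I * r / T) • u →
    ∀ (v : V) (p s t : ℤ), s ≡ (r : ℤ) [ZMOD (T : ℤ)] → ∀ w : W,
    ∑ᶠ m : ℕ, ((qchoose ((s : ℚ) / T) m : ℚ) : ℂ) •
        act (VA.Y u (p + m) v) (s + t - m * T) w
      = ∑ᶠ m : ℕ, ((-1 : ℂ) ^ m * ((qchoose (p : ℚ) m : ℚ) : ℂ)) •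
          (act u (p * T + s - m * T) (act v (t + m * T) w)
            - ((-1 : ℂ) ^ p) • act v (p * T + t - m * T) (act u (s + m * T) w))

/-! On `M(0)` the grading kills the module modes `a_k` for `k > -T` and `b_k` for `k > 0`
(module modes are in units of `1/T`). For a `g`-fixed `u` the twisted Jacobi identity at
`s = 0` gives the commutator formula `(u₀v)_t = [u_0, v_t]` and, at `p = -1`, an expansion of
`(u₋₁v)_t` whose correction terms all vanish on `M(0)`, leaving `u_{-T} v_t`. The vertex algebroid relations
`a₋₁a' = aa'`, `a₋₁b = ab`, `b₀b' = [b,b']`, `b₀a = π(b)a` then give the module axioms, and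
`∂a' = a'₋₂𝟙` acts by zero because the vacuum acts only in mode `-T`. -/

lemma qchoose_zero_right (q : ℚ) : qchoose q 0 = 1 := by simp [qchoose]

lemma qchoose_zero_left {m : ℕ} (hm : m ≠ 0) : qchoose 0 m = 0 := by
  rw [qchoose, Finset.prod_eq_zero (Finset.mem_range.2 (Nat.pos_of_ne_zero hm)) (by norm_num),
    zero_div]

namespace TwistedModule

variable {V W : Type*} [AddCommGroup V] [Module ℂ V] [AddCommGroup W] [Module ℂ W]
  {VA : VertexAlgebra V} {T : ℕ} {G : V ≃ₗ[ℂ] V} (M : TwistedModule VA T G W)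

lemma act_Y_of_fixed (hT : 0 < T) {u : V} (hu : G u = u) (v : V) (p t : ℤ) (w : W) :
    M.act (VA.Y u p v) t w
      = ∑ᶠ m : ℕ, ((-1 : ℂ) ^ m * ((qchoose (p : ℚ) m : ℚ) : ℂ)) •
          (M.act u (p * T - m * T) (M.act v (t + m * T) w)
            - ((-1 : ℂ) ^ p) • M.act v (p * T + t - m * T) (M.act u (m * T) w)) := by
  have hjac := M.jacobi u 0 hT (by simp [hu]) v p 0 t (by simp) w
  rw [finsum_eq_single _ 0 (fun m hm => by simp [qchoose_zero_left hm])] at hjac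
  simpa [qchoose_zero_right] using hjac

lemma act_Y_zero_of_fixed (hT : 0 < T) {u : V} (hu : G u = u) (v : V) (t : ℤ) (w : W) :
    M.act (VA.Y u 0 v) t w = M.act u 0 (M.act v t w) - M.act v t (M.act u 0 w) := by
  rw [M.act_Y_of_fixed hT hu, finsum_eq_single _ 0 (fun m hm => by simp [qchoose_zero_left hm])]
  simp [qchoose_zero_right]

lemma act_Y_neg_one_of_fixed (hT : 0 < T) {u : V} (hu : G u = u) (v : V) (t : ℤ) {w : W}
    (hu_w : ∀ k, -(T : ℤ) < k → M.act u k w = 0) (hv_w : ∀ k, t < k → M.act v k w = 0) :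
    M.act (VA.Y u (-1) v) t w = M.act u (-T) (M.act v t w) := by
  have hT' : (0 : ℤ) < T := by exact_mod_cast hT
  have hmT (m : ℕ) (hm : m ≠ 0) : (T : ℤ) ≤ m * T := by
    exact_mod_cast Nat.le_mul_of_pos_left T (Nat.pos_of_ne_zero hm)
  rw [M.act_Y_of_fixed hT hu, finsum_eq_single _ 0 fun m hm => by
    simp [hu_w (m * T) (by linarith [hmT m hm]), hv_w (t + m * T) (by linarith [hmT m hm])]]
  simp [qchoose_zero_right, hu_w 0 (by omega)]

lemma act_Y_vac_of_fixed (hT : 0 < T) {u : V} (hu : G u = u) {p : ℤ} (hp : p ≤ -2) (w : W) :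
    M.act (VA.Y u p VA.vac) 0 w = 0 := by
  rw [M.act_Y_of_fixed hT hu]
  refine finsum_eq_zero_of_forall_eq_zero fun m => ?_
  have hmT : (0 : ℤ) ≤ m * T := by positivity
  have hT' : (0 : ℤ) < T := by exact_mod_cast hT
  rw [M.vac_act' _ _ (by omega), M.vac_act' _ _ (by nlinarith)]
  simp

end TwistedModule

theorem stmt14_general {A B V W : Type*} [CommRing A] [Algebra ℂ A]
    [AddCommGroup B] [Module ℂ B] [AddCommGroup V] [Module ℂ V]
    [AddCommGroup W] [Module ℂ W]
    (Vb : VertexAlgebroid A B) (D : GMSData A B V Vb)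
    (g : VAAut Vb) (T : ℕ) (hT : 0 < T)
    (G : V ≃ₗ[ℂ] V)
    (hGA : ∀ a, G (D.iA a) = D.iA (g.gA a))
    (hGB : ∀ b, G (D.iB b) = D.iB (g.gB b))
    (M : TwistedModule D.VA T G W)
    (grM : ℕ → Submodule ℂ W)
    (hgrM : ∀ (p : ℕ) (u : V), u ∈ D.grade p → ∀ (k : ℤ) (q : ℕ), ∀ w ∈ grM q,
      (((q : ℤ) + p * T - k - T < 0) → M.act u k w = 0) ∧
      (∀ m : ℕ, (m : ℤ) = (q : ℤ) + p * T - k - T → M.act u k w ∈ grM m)) :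
    ∀ w ∈ grM 0,
      (∀ a : A, g.gA a = a → M.act (D.iA a) (-(T : ℤ)) w ∈ grM 0) ∧
      (∀ b : B, g.gB b = b → M.act (D.iB b) 0 w ∈ grM 0) ∧
      (M.act (D.iA 1) (-(T : ℤ)) w = w) ∧
      (∀ a a' : A, g.gA a = a → g.gA a' = a' →
        M.act (D.iA (a * a')) (-(T : ℤ)) w
          = M.act (D.iA a) (-(T : ℤ)) (M.act (D.iA a') (-(T : ℤ)) w)) ∧
      (∀ b b' : B, g.gB b = b → g.gB b' = b' →
        M.act (D.iB (Vb.br b b')) 0 w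
          = M.act (D.iB b) 0 (M.act (D.iB b') 0 w)
            - M.act (D.iB b') 0 (M.act (D.iB b) 0 w)) ∧
      (∀ (b : B) (a : A), g.gB b = b → g.gA a = a →
        M.act (D.iB b) 0 (M.act (D.iA a) (-(T : ℤ)) w)
            - M.act (D.iA a) (-(T : ℤ)) (M.act (D.iB b) 0 w)
          = M.act (D.iA (Vb.pi b a)) (-(T : ℤ)) w) ∧
      (∀ (a : A) (b : B), g.gA a = a → g.gB b = b →
        M.act (D.iA a) (-(T : ℤ)) (M.act (D.iB b) 0 w)
          = M.act (D.iB (Vb.act a b)) 0 w) ∧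
      (∀ a a' : A, g.gA a = a → g.gA a' = a' →
        M.act (D.iB (Vb.act a (Vb.d a'))) 0 w = 0) := by
  intro w hw
  have memA (a : A) : D.iA a ∈ D.grade 0 := D.grade0 ▸ LinearMap.mem_range_self D.iA a
  have memB (b : B) : D.iB b ∈ D.grade 1 := D.grade1 ▸ LinearMap.mem_range_self D.iB b
  have actA_eq_zero (a : A) (k : ℤ) (hk : -(T : ℤ) < k) : M.act (D.iA a) k w = 0 :=
    (hgrM 0 _ (memA a) k 0 w hw).1 (by push_cast; omega)
  have actB_eq_zero (b : B) (k : ℤ) (hk : 0 < k) : M.act (D.iB b) k w = 0 :=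
    (hgrM 1 _ (memB b) k 0 w hw).1 (by push_cast; omega)
  have fixA {a : A} (ha : g.gA a = a) : G (D.iA a) = D.iA a := by rw [hGA, ha]
  have fixB {b : B} (hb : g.gB b = b) : G (D.iB b) = D.iB b := by rw [hGB, hb]
  refine ⟨fun a _ => (hgrM 0 _ (memA a) _ 0 w hw).2 0 (by push_cast; ring),
    fun b _ => (hgrM 1 _ (memB b) 0 0 w hw).2 0 (by push_cast; ring),
    by rw [← D.vac_eq]; exact M.vac_act w, ?assoc, ?bracket, ?anchor, ?act_mul, ?act_d⟩
  case assoc =>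
    intro a a' ha _
    rw [← D.hAA, M.act_Y_neg_one_of_fixed hT (fixA ha) _ _ (actA_eq_zero a) (actA_eq_zero a')]
  case bracket =>
    intro b b' hb _
    rw [← D.hBB0, M.act_Y_zero_of_fixed hT (fixB hb)]
  case anchor =>
    intro b a hb _
    rw [← D.hBA, M.act_Y_zero_of_fixed hT (fixB hb)]
  case act_mul =>
    intro a b ha _
    rw [← D.hAB, M.act_Y_neg_one_of_fixed hT (fixA ha) _ _ (actA_eq_zero a) (actB_eq_zero b)]
  case act_d =>
    intro a a' ha ha'
    rw [← D.hAB, M.act_Y_neg_one_of_fixed hT (fixA ha) _ _ (actA_eq_zero a) (actB_eq_zero _),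
      ← D.hD, M.act_Y_vac_of_fixed hT (fixA ha') le_rfl, map_zero]

/-- Proposition 3.13: for a `(1/T)ℕ`-graded `g`-twisted
`V_B`-module `M = ⊕_{n ∈ (1/T)ℕ} M(n)` (the piece `grM k` has degree `k/T`),
the degree-zero subspace `M(0)` is a module for the Lie `A⁰`-algebroid
`B⁰/A⁰∂A⁰` via `a·w = a₋₁w` and `b·w = b₀w`, where `A⁰`, `B⁰` are the
`g`-fixed points. (In units of `1/T`: `a₋₁w = act (iA a) (-T) w` and
`b₀w = act (iB b) 0 w`.) -/
theorem stmt14 {A B V W : Type*} [CommRing A] [Algebra ℂ A]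
    [AddCommGroup B] [Module ℂ B] [AddCommGroup V] [Module ℂ V]
    [AddCommGroup W] [Module ℂ W]
    (Vb : VertexAlgebroid A B) (D : GMSData A B V Vb)
    (g : VAAut Vb) (T : ℕ) (hT : 0 < T)
    (hordA : ∀ a, (fun x => g.gA x)^[T] a = a)
    (hordB : ∀ b, (fun x => g.gB x)^[T] b = b)
    (G : V ≃ₗ[ℂ] V) (hvac : G D.VA.vac = D.VA.vac)
    (hY : ∀ (u : V) (n : ℤ) (v : V), G (D.VA.Y u n v) = D.VA.Y (G u) n (G v))
    (hGA : ∀ a, G (D.iA a) = D.iA (g.gA a))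
    (hGB : ∀ b, G (D.iB b) = D.iB (g.gB b))
    (M : TwistedModule D.VA T G W)
    (grM : ℕ → Submodule ℂ W) (hint : DirectSum.IsInternal grM)
    (hgrM : ∀ (p : ℕ) (u : V), u ∈ D.grade p → ∀ (k : ℤ) (q : ℕ), ∀ w ∈ grM q,
      (((q : ℤ) + p * T - k - T < 0) → M.act u k w = 0) ∧
      (∀ m : ℕ, (m : ℤ) = (q : ℤ) + p * T - k - T → M.act u k w ∈ grM m)) :
    ∀ w ∈ grM 0,
      (∀ a : A, g.gA a = a → M.act (D.iA a) (-(T : ℤ)) w ∈ grM 0) ∧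
      (∀ b : B, g.gB b = b → M.act (D.iB b) 0 w ∈ grM 0) ∧
      (M.act (D.iA 1) (-(T : ℤ)) w = w) ∧
      (∀ a a' : A, g.gA a = a → g.gA a' = a' →
        M.act (D.iA (a * a')) (-(T : ℤ)) w
          = M.act (D.iA a) (-(T : ℤ)) (M.act (D.iA a') (-(T : ℤ)) w)) ∧
      (∀ b b' : B, g.gB b = b → g.gB b' = b' →
        M.act (D.iB (Vb.br b b')) 0 w
          = M.act (D.iB b) 0 (M.act (D.iB b') 0 w)
            - M.act (D.iB b') 0 (M.act (D.iB b) 0 w)) ∧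
      (∀ (b : B) (a : A), g.gB b = b → g.gA a = a →
        M.act (D.iB b) 0 (M.act (D.iA a) (-(T : ℤ)) w)
            - M.act (D.iA a) (-(T : ℤ)) (M.act (D.iB b) 0 w)
          = M.act (D.iA (Vb.pi b a)) (-(T : ℤ)) w) ∧
      (∀ (a : A) (b : B), g.gA a = a → g.gB b = b →
        M.act (D.iA a) (-(T : ℤ)) (M.act (D.iB b) 0 w)
          = M.act (D.iB (Vb.act a b)) 0 w) ∧
      (∀ a a' : A, g.gA a = a → g.gA a' = a' →
        M.act (D.iB (Vb.act a (Vb.d a'))) 0 w = 0) :=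
  stmt14_general Vb D g T hT G hGA hGB M grM hgrM
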